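/- Let δ > 0 and ψ(v) = v²/(1 − δv²), with ψ'(v) = 2v/(1 − δv²)² and ψ''(v) = 2(1 + 3δv²)/(1 − δv²)³. Then for every v with 1 ≤ v and δv² < 1, one has (−2/v + δ)·(1/ψ'(v)) − ψ''(v)/ψ'(v)² + 3/(2ψ(v)) < 0. -/
import Mathlib


/-- For `ψ v = v²/(1 - δv²)`, `ψ' v = 2v/(1 - δv²)²`, `ψ'' v = 2(1+3δv²)/(1-δv²)³`,
one has `(-2/v + δ)(1/ψ') - ψ''/ψ'² + 3/(2ψ) < 0` whenever `1 ≤ v` and `δ v² < 1`. -/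
theorem stmt_9 (δ v : ℝ) (hδ : 0 < δ) (hv : 1 ≤ v) (h : δ * v ^ 2 < 1) :
    (-2 / v + δ) * (1 / (2 * v / (1 - δ * v ^ 2) ^ 2))
      - (2 * (1 + 3 * δ * v ^ 2) / (1 - δ * v ^ 2) ^ 3)
          / (2 * v / (1 - δ * v ^ 2) ^ 2) ^ 2
      + 3 / (2 * (v ^ 2 / (1 - δ * v ^ 2))) < 0 := by
  have hv0 : 0 < v := lt_of_lt_of_le one_pos hv
  have hu : 0 < 1 - δ * v ^ 2 := by linarith
  have key : (-2 / v + δ) * (1 / (2 * v / (1 - δ * v ^ 2) ^ 2))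
      - (2 * (1 + 3 * δ * v ^ 2) / (1 - δ * v ^ 2) ^ 3)
          / (2 * v / (1 - δ * v ^ 2) ^ 2) ^ 2
      + 3 / (2 * (v ^ 2 / (1 - δ * v ^ 2)))
      = δ * (1 - δ * v ^ 2) * (1 - v - δ * v ^ 2) / (2 * v) := by
    field_simp
    ring
  rw [key]
  apply div_neg_of_neg_of_pos
  · have h1 : 1 - v - δ * v ^ 2 < 0 := by nlinarith [mul_pos hδ (pow_pos hv0 2)]
    have := mul_pos hδ hu
    nlinarith
  · linarith
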